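/- Let n ≥ 1 and let f, h : ℝⁿ → ℝ be smooth functions satisfying Δh + ‖∇h‖² − ⟨∇h, ∇f⟩ = 0 at every point of ℝⁿ. Then for every smooth compactly supported function φ : ℝⁿ → ℝ, ∫_{ℝⁿ} φ(x)² ‖∇h(x)‖² e^{-f(x)} dx ≤ 4 ∫_{ℝⁿ} ‖∇φ(x)‖² e^{-f(x)} dx. -/

import Mathlib

open MeasureTheory

/-- The (Euclidean) Laplacian of `h : ℝⁿ → ℝ`, i.e. the sum of the pure second partial
derivatives `∂²h/∂xᵢ²`. -/
noncomputable def laplacian {n : ℕ} (h : EuclideanSpace ℝ (Fin n) → ℝ)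
    (x : EuclideanSpace ℝ (Fin n)) : ℝ :=
  ∑ i : Fin n, iteratedFDeriv ℝ 2 h x (fun _ => EuclideanSpace.single i (1 : ℝ))

section Aux
variable {n : ℕ}

lemma inner_gradient_eq (g : EuclideanSpace ℝ (Fin n) → ℝ) (x v : EuclideanSpace ℝ (Fin n)) :
    (inner ℝ (gradient g x) v : ℝ) = fderiv ℝ g x v := by
  rw [gradient]; exact InnerProductSpace.toDual_symm_apply

lemma norm_gradient_eq (g : EuclideanSpace ℝ (Fin n) → ℝ) (x : EuclideanSpace ℝ (Fin n)) :
    ‖gradient g x‖ = ‖fderiv ℝ g x‖ := by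
  rw [gradient]; exact LinearIsometryEquiv.norm_map _ _

lemma continuous_gradient {g : EuclideanSpace ℝ (Fin n) → ℝ} (hg : ContDiff ℝ (⊤ : ℕ∞) g) :
    Continuous (gradient g) := by
  have : Continuous (fun x => (InnerProductSpace.toDual ℝ (EuclideanSpace ℝ (Fin n))).symm
      (fderiv ℝ g x)) :=
    (LinearIsometryEquiv.continuous _).comp (hg.continuous_fderiv (by simp))
  exact this

lemma gradient_coord (g : EuclideanSpace ℝ (Fin n) → ℝ) (x : EuclideanSpace ℝ (Fin n))
    (i : Fin n) : gradient g x i = fderiv ℝ g x (EuclideanSpace.single i (1 : ℝ)) := by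
  rw [← inner_gradient_eq, EuclideanSpace.inner_single_right]
  simp

lemma inner_grad_sum (g k : EuclideanSpace ℝ (Fin n) → ℝ) (x : EuclideanSpace ℝ (Fin n)) :
    (inner ℝ (gradient g x) (gradient k x) : ℝ) =
      ∑ i : Fin n, fderiv ℝ g x (EuclideanSpace.single i (1 : ℝ)) *
        fderiv ℝ k x (EuclideanSpace.single i (1 : ℝ)) := by
  rw [PiLp.inner_apply]
  refine Finset.sum_congr rfl fun i _ => ?_
  simp only [RCLike.inner_apply, conj_trivial, gradient_coord]
  ring

lemma norm_grad_sq_sum (g : EuclideanSpace ℝ (Fin n) → ℝ) (x : EuclideanSpace ℝ (Fin n)) :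
    ‖gradient g x‖ ^ 2 =
      ∑ i : Fin n, fderiv ℝ g x (EuclideanSpace.single i (1 : ℝ)) *
        fderiv ℝ g x (EuclideanSpace.single i (1 : ℝ)) := by
  rw [← real_inner_self_eq_norm_sq, inner_grad_sum]

lemma supp_sub {α β γ : Type*} [Zero β] [Zero γ] [TopologicalSpace α] {g : α → β} {k : α → γ}
    (hk : ∀ x, g x = 0 → k x = 0) : Function.support k ⊆ tsupport g := fun x hx =>
  subset_tsupport g (fun h0 => hx (hk x h0))

lemma integrable_aux {β : Type*} [Zero β] [TopologicalSpace β] {g : EuclideanSpace ℝ (Fin n) → β}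
    {k : EuclideanSpace ℝ (Fin n) → ℝ} (hg : HasCompactSupport g)
    (hk : Continuous k) (h0 : ∀ x, g x = 0 → k x = 0) : Integrable k := by
  exact hk.integrable_of_hasCompactSupport (hg.mono' (supp_sub h0))

lemma second_deriv_eq {h : EuclideanSpace ℝ (Fin n) → ℝ} (hh : ContDiff ℝ (⊤ : ℕ∞) h)
    (i : Fin n) (x : EuclideanSpace ℝ (Fin n)) :
    fderiv ℝ (fun y => fderiv ℝ h y (EuclideanSpace.single i (1 : ℝ))) x
        (EuclideanSpace.single i (1 : ℝ)) =
      iteratedFDeriv ℝ 2 h x (fun _ => EuclideanSpace.single i (1 : ℝ)) := by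
  have hh1 : ContDiff ℝ (⊤ : ℕ∞) (fderiv ℝ h) := hh.fderiv_right (by simp)
  rw [iteratedFDeriv_two_apply,
    fderiv_clm_apply (hh1.differentiable (by simp) x) (differentiableAt_const _)]
  simp

lemma fderiv_P_eq {f φ : EuclideanSpace ℝ (Fin n) → ℝ} (hf : ContDiff ℝ (⊤ : ℕ∞) f)
    (hφ : ContDiff ℝ (⊤ : ℕ∞) φ) (x v : EuclideanSpace ℝ (Fin n)) :
    fderiv ℝ (fun y => φ y ^ 2 * Real.exp (-f y)) x v =
      2 * φ x * fderiv ℝ φ x v * Real.exp (-f x)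
        - φ x ^ 2 * fderiv ℝ f x v * Real.exp (-f x) := by
  have hφx := (hφ.differentiable (by simp) x).hasFDerivAt
  have h1 : HasFDerivAt (fun y => φ y ^ 2) ((2 * φ x) • fderiv ℝ φ x) x := by
    have := hφx.mul hφx
    have he : (fun y => φ y * φ y) = fun y => φ y ^ 2 := by ext y; ring
    rw [show φ * φ = fun y => φ y * φ y from rfl, he] at this
    rw [show (2 * φ x) • fderiv ℝ φ x = φ x • fderiv ℝ φ x + φ x • fderiv ℝ φ x by
      rw [two_mul, add_smul]]
    exact this
  have hfd : HasFDerivAt (fun y => -f y) (-(fderiv ℝ f x)) x :=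
    ((hf.differentiable (by simp) x).hasFDerivAt).neg
  have h2 : HasFDerivAt (fun y => Real.exp (-f y)) ((-Real.exp (-f x)) • fderiv ℝ f x) x := by
    have := (Real.hasDerivAt_exp (-f x)).comp_hasFDerivAt x hfd
    rw [show (-Real.exp (-f x)) • fderiv ℝ f x = Real.exp (-f x) • -fderiv ℝ f x by
      rw [smul_neg, neg_smul]]
    exact this
  have h3 := h1.mul h2
  rw [show (fun y => φ y ^ 2 * Real.exp (-f y)) =
      (fun y => φ y ^ 2) * (fun y => Real.exp (-f y)) from rfl, h3.fderiv]
  simp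
  ring

end Aux

/-- If smooth `f, h : ℝⁿ → ℝ` satisfy `Δh + ‖∇h‖² − ⟨∇h, ∇f⟩ = 0`
everywhere, then for every smooth compactly supported `φ`,
`∫ φ² ‖∇h‖² e^{-f} ≤ 4 ∫ ‖∇φ‖² e^{-f}`. -/
theorem caccioppoli_inequality
    {n : ℕ} (hn : 1 ≤ n)
    (f h : EuclideanSpace ℝ (Fin n) → ℝ)
    (hf : ContDiff ℝ (⊤ : ℕ∞) f) (hh : ContDiff ℝ (⊤ : ℕ∞) h)
    (heq : ∀ x, laplacian h x + ‖gradient h x‖ ^ 2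
      - (inner ℝ (gradient h x) (gradient f x) : ℝ) = 0) :
    ∀ φ : EuclideanSpace ℝ (Fin n) → ℝ, ContDiff ℝ (⊤ : ℕ∞) φ → HasCompactSupport φ →
      ∫ x, φ x ^ 2 * ‖gradient h x‖ ^ 2 * Real.exp (-f x) ≤
        4 * ∫ x, ‖gradient φ x‖ ^ 2 * Real.exp (-f x) := by
  intro φ hφ hφc
  set P : EuclideanSpace ℝ (Fin n) → ℝ := fun x => φ x ^ 2 * Real.exp (-f x) with hPdef
  have hρ : ContDiff ℝ (⊤ : ℕ∞) (fun x : EuclideanSpace ℝ (Fin n) => Real.exp (-f x)) := (hf.neg).exp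
  have hP : ContDiff ℝ (⊤ : ℕ∞) P := (hφ.pow 2).mul hρ
  have hPzero : ∀ x, φ x = 0 → P x = 0 := fun x hx => by simp [hPdef, hx]
  have hPc : HasCompactSupport P := hφc.mono' (supp_sub hPzero)
  have hh1 : ContDiff ℝ (⊤ : ℕ∞) (fderiv ℝ h) := hh.fderiv_right (by simp)
  have hDh : Differentiable ℝ (fderiv ℝ h) := hh1.differentiable (by simp)
  -- continuity facts
  have cρ : Continuous (fun x : EuclideanSpace ℝ (Fin n) => Real.exp (-f x)) := hρ.continuous
  have cgh : Continuous (gradient h) := continuous_gradient hh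
  have cgf : Continuous (gradient f) := continuous_gradient hf
  have cgφ : Continuous (gradient φ) := continuous_gradient hφ
  have cφ : Continuous φ := hφ.continuous
  have cP : Continuous P := hP.continuous
  have cfP : Continuous (fun x => fderiv ℝ P x) := hP.continuous_fderiv (by simp)
  have cfh : Continuous (fun x => fderiv ℝ h x) := hh.continuous_fderiv (by simp)
  have hki : ∀ i : Fin n,
      ContDiff ℝ (⊤ : ℕ∞) (fun y => fderiv ℝ h y (EuclideanSpace.single i (1 : ℝ))) := fun i =>
    hh1.clm_apply contDiff_const
  -- integrability of all players
  have int1 : Integrable (fun x => φ x ^ 2 * ‖gradient h x‖ ^ 2 * Real.exp (-f x)) :=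
    integrable_aux hφc (((cφ.pow 2).mul (cgh.norm.pow 2)).mul cρ)
      (fun x hx => by simp [hx])
  have int2 : Integrable (fun x =>
      φ x * (inner ℝ (gradient φ x) (gradient h x) : ℝ) * Real.exp (-f x)) :=
    integrable_aux hφc ((cφ.mul (cgφ.inner cgh)).mul cρ) (fun x hx => by simp [hx])
  have int3 : Integrable (fun x => ‖gradient φ x‖ ^ 2 * Real.exp (-f x)) := by
    refine integrable_aux (hφc.fderiv (𝕜 := ℝ)) ((cgφ.norm.pow 2).mul cρ) (fun x hx => ?_)
    simp [norm_gradient_eq, hx]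
  have int4 : Integrable (fun x =>
      φ x ^ 2 * (inner ℝ (gradient f x) (gradient h x) : ℝ) * Real.exp (-f x)) :=
    integrable_aux hφc (((cφ.pow 2).mul (cgf.inner cgh)).mul cρ) (fun x hx => by simp [hx])
  have int5 : ∀ i : Fin n, Integrable (fun x =>
      fderiv ℝ P x (EuclideanSpace.single i (1 : ℝ)) *
        fderiv ℝ h x (EuclideanSpace.single i (1 : ℝ))) := by
    intro i
    refine integrable_aux (hPc.fderiv (𝕜 := ℝ))
      ((cfP.clm_apply continuous_const).mul (cfh.clm_apply continuous_const))
      (fun x hx => by simp [hx])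
  have int6 : ∀ i : Fin n, Integrable (fun x => P x *
      fderiv ℝ (fun y => fderiv ℝ h y (EuclideanSpace.single i (1 : ℝ))) x
        (EuclideanSpace.single i (1 : ℝ))) := by
    intro i
    refine integrable_aux hφc
      (cP.mul (((hki i).continuous_fderiv (by simp)).clm_apply continuous_const))
      (fun x hx => by simp [hPzero x hx])
  have int7 : ∀ i : Fin n, Integrable (fun x =>
      P x * fderiv ℝ h x (EuclideanSpace.single i (1 : ℝ))) := by
    intro i
    exact integrable_aux hφc (cP.mul (cfh.clm_apply continuous_const))
      (fun x hx => by simp [hPzero x hx])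
  -- integration by parts in each direction
  have IBP : ∀ i : Fin n, ∫ x, P x *
      fderiv ℝ (fun y => fderiv ℝ h y (EuclideanSpace.single i (1 : ℝ))) x
        (EuclideanSpace.single i (1 : ℝ)) =
      - ∫ x, fderiv ℝ P x (EuclideanSpace.single i (1 : ℝ)) *
        fderiv ℝ h x (EuclideanSpace.single i (1 : ℝ)) := fun i =>
    integral_mul_fderiv_eq_neg_fderiv_mul_of_integrable (int5 i) (int6 i) (int7 i)
      (fun x _ => hP.differentiable (by simp) x)
      (fun x _ => hDh.clm_apply (differentiable_const _) x)
  -- Step A : ∫ P Δh = ∑ i ∫ P ∂ᵢ∂ᵢ h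
  have stepA : ∫ x, P x * laplacian h x =
      ∑ i : Fin n, ∫ x, P x *
        fderiv ℝ (fun y => fderiv ℝ h y (EuclideanSpace.single i (1 : ℝ))) x
          (EuclideanSpace.single i (1 : ℝ)) := by
    rw [← integral_finset_sum _ (fun i _ => int6 i)]
    congr 1
    ext x
    rw [laplacian, Finset.mul_sum]
    refine Finset.sum_congr rfl (fun i _ => ?_)
    rw [second_deriv_eq hh i x]
  -- Step B : sum of the IBP identities
  have stepB : ∫ x, P x * laplacian h x =
      - ∫ x, ∑ i : Fin n, fderiv ℝ P x (EuclideanSpace.single i (1 : ℝ)) *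
        fderiv ℝ h x (EuclideanSpace.single i (1 : ℝ)) := by
    rw [stepA, integral_finset_sum _ (fun i _ => int5 i), ← Finset.sum_neg_distrib]
    exact Finset.sum_congr rfl (fun i _ => IBP i)
  -- Step C : pointwise identification of the sum
  have stepC : ∀ x, ∑ i : Fin n, fderiv ℝ P x (EuclideanSpace.single i (1 : ℝ)) *
        fderiv ℝ h x (EuclideanSpace.single i (1 : ℝ)) =
      2 * (φ x * (inner ℝ (gradient φ x) (gradient h x) : ℝ) * Real.exp (-f x))
        - φ x ^ 2 * (inner ℝ (gradient f x) (gradient h x) : ℝ) * Real.exp (-f x) := by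
    intro x
    have hPP : ∀ i : Fin n, fderiv ℝ P x (EuclideanSpace.single i (1 : ℝ)) *
          fderiv ℝ h x (EuclideanSpace.single i (1 : ℝ)) =
        (2 * φ x * Real.exp (-f x)) * (fderiv ℝ φ x (EuclideanSpace.single i (1 : ℝ)) *
            fderiv ℝ h x (EuclideanSpace.single i (1 : ℝ)))
          - (φ x ^ 2 * Real.exp (-f x)) * (fderiv ℝ f x (EuclideanSpace.single i (1 : ℝ)) *
            fderiv ℝ h x (EuclideanSpace.single i (1 : ℝ))) := by
      intro i
      have : fderiv ℝ P x (EuclideanSpace.single i (1 : ℝ)) =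
          2 * φ x * fderiv ℝ φ x (EuclideanSpace.single i (1 : ℝ)) * Real.exp (-f x)
            - φ x ^ 2 * fderiv ℝ f x (EuclideanSpace.single i (1 : ℝ)) * Real.exp (-f x) := by
        simp only [hPdef]
        exact fderiv_P_eq hf hφ x _
      rw [this]
      ring
    rw [Finset.sum_congr rfl (fun i _ => hPP i), Finset.sum_sub_distrib,
      ← Finset.mul_sum, ← Finset.mul_sum, ← inner_grad_sum, ← inner_grad_sum]
    ring
  -- Step D : pointwise identification of P * Δh using the equation
  have stepD : ∀ x, P x * laplacian h x =
      φ x ^ 2 * (inner ℝ (gradient f x) (gradient h x) : ℝ) * Real.exp (-f x)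
        - φ x ^ 2 * ‖gradient h x‖ ^ 2 * Real.exp (-f x) := by
    intro x
    have hx := heq x
    rw [real_inner_comm] at hx
    have hl : laplacian h x = (inner ℝ (gradient f x) (gradient h x) : ℝ)
        - ‖gradient h x‖ ^ 2 := by linarith
    simp only [hPdef]
    rw [hl]
    ring
  -- key identity : ∫ φ²‖∇h‖² e^{-f} = 2 ∫ φ⟨∇φ,∇h⟩ e^{-f}
  have key : ∫ x, φ x ^ 2 * ‖gradient h x‖ ^ 2 * Real.exp (-f x) =
      2 * ∫ x, φ x * (inner ℝ (gradient φ x) (gradient h x) : ℝ) * Real.exp (-f x) := by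
    have e1 : ∫ x, P x * laplacian h x =
        (∫ x, φ x ^ 2 * (inner ℝ (gradient f x) (gradient h x) : ℝ) * Real.exp (-f x))
          - ∫ x, φ x ^ 2 * ‖gradient h x‖ ^ 2 * Real.exp (-f x) := by
      rw [show (fun x => P x * laplacian h x) = fun x =>
          φ x ^ 2 * (inner ℝ (gradient f x) (gradient h x) : ℝ) * Real.exp (-f x)
            - φ x ^ 2 * ‖gradient h x‖ ^ 2 * Real.exp (-f x) from funext stepD]
      exact integral_sub int4 int1
    have e2 : ∫ x, ∑ i : Fin n, fderiv ℝ P x (EuclideanSpace.single i (1 : ℝ)) *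
          fderiv ℝ h x (EuclideanSpace.single i (1 : ℝ)) =
        2 * (∫ x, φ x * (inner ℝ (gradient φ x) (gradient h x) : ℝ) * Real.exp (-f x))
          - ∫ x, φ x ^ 2 * (inner ℝ (gradient f x) (gradient h x) : ℝ) * Real.exp (-f x) := by
      rw [show (fun x => ∑ i : Fin n, fderiv ℝ P x (EuclideanSpace.single i (1 : ℝ)) *
            fderiv ℝ h x (EuclideanSpace.single i (1 : ℝ))) = fun x =>
          2 * (φ x * (inner ℝ (gradient φ x) (gradient h x) : ℝ) * Real.exp (-f x))
            - φ x ^ 2 * (inner ℝ (gradient f x) (gradient h x) : ℝ) * Real.exp (-f x)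
          from funext stepC]
      rw [integral_sub (int2.const_mul 2) int4, integral_const_mul]
    have hB := stepB
    rw [e1, e2] at hB
    linarith
  -- final estimate via AM-GM
  have bound : 2 * ∫ x, φ x * (inner ℝ (gradient φ x) (gradient h x) : ℝ) * Real.exp (-f x) ≤
      (1 / 2) * (∫ x, φ x ^ 2 * ‖gradient h x‖ ^ 2 * Real.exp (-f x))
        + 2 * ∫ x, ‖gradient φ x‖ ^ 2 * Real.exp (-f x) := by
    have mono : ∫ x, 2 * (φ x * (inner ℝ (gradient φ x) (gradient h x) : ℝ) * Real.exp (-f x)) ≤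
        ∫ x, ((1 / 2) * (φ x ^ 2 * ‖gradient h x‖ ^ 2 * Real.exp (-f x))
          + 2 * (‖gradient φ x‖ ^ 2 * Real.exp (-f x))) := by
      refine integral_mono (int2.const_mul 2) ((int1.const_mul (1/2)).add (int3.const_mul 2))
        (fun x => ?_)
      have hρpos : (0:ℝ) < Real.exp (-f x) := Real.exp_pos _
      have hcs : |(inner ℝ (gradient φ x) (gradient h x) : ℝ)| ≤
          ‖gradient φ x‖ * ‖gradient h x‖ := abs_real_inner_le_norm _ _
      have habs : φ x * (inner ℝ (gradient φ x) (gradient h x) : ℝ) ≤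
          |φ x| * (‖gradient φ x‖ * ‖gradient h x‖) := by
        calc φ x * (inner ℝ (gradient φ x) (gradient h x) : ℝ) ≤
            |φ x * (inner ℝ (gradient φ x) (gradient h x) : ℝ)| := le_abs_self _
          _ = |φ x| * |(inner ℝ (gradient φ x) (gradient h x) : ℝ)| := abs_mul _ _
          _ ≤ |φ x| * (‖gradient φ x‖ * ‖gradient h x‖) :=
              mul_le_mul_of_nonneg_left hcs (abs_nonneg _)
      have hsq : 2 * (|φ x| * (‖gradient φ x‖ * ‖gradient h x‖)) ≤
          (1 / 2) * (φ x ^ 2 * ‖gradient h x‖ ^ 2) + 2 * ‖gradient φ x‖ ^ 2 := by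
        nlinarith [sq_nonneg (|φ x| * ‖gradient h x‖ - 2 * ‖gradient φ x‖), sq_abs (φ x)]
      nlinarith [mul_le_mul_of_nonneg_right habs hρpos.le,
        mul_le_mul_of_nonneg_right hsq hρpos.le]
    calc 2 * ∫ x, φ x * (inner ℝ (gradient φ x) (gradient h x) : ℝ) * Real.exp (-f x)
        = ∫ x, 2 * (φ x * (inner ℝ (gradient φ x) (gradient h x) : ℝ) * Real.exp (-f x)) := by
          rw [integral_const_mul]
      _ ≤ ∫ x, ((1 / 2) * (φ x ^ 2 * ‖gradient h x‖ ^ 2 * Real.exp (-f x))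
          + 2 * (‖gradient φ x‖ ^ 2 * Real.exp (-f x))) := mono
      _ = (1 / 2) * (∫ x, φ x ^ 2 * ‖gradient h x‖ ^ 2 * Real.exp (-f x))
          + 2 * ∫ x, ‖gradient φ x‖ ^ 2 * Real.exp (-f x) := by
          rw [integral_add (int1.const_mul (1/2)) (int3.const_mul 2),
            integral_const_mul, integral_const_mul]
  linarith [key, bound]
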